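/- Painless non-orthogonal expansions: let g ∈ L^∞(ℝᵈ) with supp g ⊆ [0, L]ᵈ, and α ≤ L, β ≤ 1/L. Then the Ron–Shen matrix R(x) with entries R(x)_{k,l} = Σ_{j∈ℤᵈ} g(x + αj − k/β) conj(g)(x + αj − l/β) is diagonal for a.e. x, and the Gabor system G(g, α, β) is a frame for L²(ℝᵈ) if and only if ess inf_{x∈ℝᵈ} Σ_{k∈ℤᵈ} |g(x − αk)|² > 0. -/

import Mathlib

open MeasureTheory Complex Real Finset
noncomputable section

/-- `Rd d` is Euclidean space `ℝ^d`. -/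
abbrev Rd (d : ℕ) := Fin d → ℝ
/-- Phase space (time-frequency space) `ℝ^d × ℝ^d`. -/
abbrev PS (d : ℕ) := Rd d × Rd d

/-- Euclidean dot product. -/
def dotR {d : ℕ} (x y : Rd d) : ℝ := ∑ i, x i * y i

/-- Time-frequency shift `π(w)f(t) = e^{2πi w₂·t} f(t - w₁)`. -/
def tfShift {d : ℕ} (w : PS d) (f : Rd d → ℂ) : Rd d → ℂ :=
  fun t => Complex.exp (2 * (π : ℂ) * I * (dotR w.2 t : ℝ)) * f (t - w.1)

/-- Short-time Fourier transform `V_g f(x, ξ) = ∫ f(t) conj(g)(t-x) e^{-2πi ξ·t} dt`. -/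
def stft {d : ℕ} (g f : Rd d → ℂ) (z : PS d) : ℂ :=
  ∫ t, f t * (starRingEnd ℂ) (g (t - z.1)) *
    Complex.exp (-(2 * (π : ℂ) * I * (dotR z.2 t : ℝ)))

/-- `L²` inner product `⟨f, h⟩ = ∫ f conj(h)` (linear in the first argument). -/
def l2inner {d : ℕ} (f h : Rd d → ℂ) : ℂ := ∫ t, f t * (starRingEnd ℂ) (h t)

/-- Cast an integer vector to a real vector. -/
def rvec {d : ℕ} (k : Fin d → ℤ) : Rd d := fun i => (k i : ℝ)

/-!
For a fixed time shift `αk`, the function `f · conj g(· - αk)` is supported in a cube of side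
`L ≤ 1/β`, so Parseval's identity for Fourier series on a cube of side `1/β` turns
`Σ_l |⟨f, π(αk, βl) g⟩|²` into `β⁻ᵈ ∫ |f|² |g(· - αk)|²`. Summing over `k`,
`Σ_λ |⟨f, π(λ) g⟩|² = β⁻ᵈ ∫ |f|² G` with `G = Σ_k |g(· - αk)|²`. Only boundedly many translates
of `g` meet a given point, so `G` is bounded, and the frame inequalities hold iff `G` is
essentially bounded below. The Ron–Shen matrix is diagonal because translates of `g` by distinct
multiples of `1/β ≥ L` overlap only on a null set.
-/

open scoped ENNReal

section WeightedL2

variable {X : Type*} [MeasurableSpace X] {μ : Measure X}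

lemma MeasureTheory.MemLp.ofReal_integral_norm_sq {E : Type*} [NormedAddCommGroup E] {f : X → E}
    (hf : MemLp f 2 μ) :
    ENNReal.ofReal (∫ x, ‖f x‖ ^ 2 ∂μ) = ∫⁻ x, ‖f x‖ₑ ^ 2 ∂μ := by
  rw [ofReal_integral_eq_lintegral_ofReal (hf.integrable_norm_pow two_ne_zero)
    (ae_of_all _ fun _ => by positivity)]
  simp

lemma ae_le_of_forall_memLp_le_lintegral_mul [SigmaFinite μ] {w : X → ℝ≥0∞} {c : ℝ≥0∞}
    (h : ∀ f : X → ℂ, MemLp f 2 μ → c * ∫⁻ x, ‖f x‖ₑ ^ 2 ∂μ ≤ ∫⁻ x, ‖f x‖ₑ ^ 2 * w x ∂μ) :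
    ∀ᵐ x ∂μ, c ≤ w x := by
  refine ae_le_of_forall_setLIntegral_le_of_sigmaFinite measurable_const fun s hs hμs => ?_
  have hind : ∀ x, ‖s.indicator (fun _ => (1 : ℂ)) x‖ₑ ^ 2 = s.indicator 1 x := by
    intro x
    by_cases hx : x ∈ s <;> simp [hx]
  have hindw : ∀ x, s.indicator 1 x * w x = s.indicator w x := by
    intro x
    by_cases hx : x ∈ s <;> simp [hx]
  have := h _ (memLp_indicator_const 2 hs (1 : ℂ) (Or.inr hμs.ne))
  simp only [hind, hindw, lintegral_indicator hs, Pi.one_apply, setLIntegral_one] at this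
  rwa [setLIntegral_const]

theorem exists_lintegral_mul_bounds_iff_ae_le [SigmaFinite μ] {w : X → ℝ≥0∞} {M : ℝ≥0∞} (hM : M ≠ ∞)
    (hwM : ∀ x, w x ≤ M) :
    (∃ A B : ℝ, 0 < A ∧ 0 < B ∧ ∀ f : X → ℂ, MemLp f 2 μ →
        A * ∫ x, ‖f x‖ ^ 2 ∂μ ≤ (∫⁻ x, ‖f x‖ₑ ^ 2 * w x ∂μ).toReal ∧
          (∫⁻ x, ‖f x‖ₑ ^ 2 * w x ∂μ).toReal ≤ B * ∫ x, ‖f x‖ ^ 2 ∂μ) ↔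
      ∃ c : ℝ, 0 < c ∧ ∀ᵐ x ∂μ, c ≤ (w x).toReal := by
  have hupper : ∀ f : X → ℂ,
      ∫⁻ x, ‖f x‖ₑ ^ 2 * w x ∂μ ≤ M * ∫⁻ x, ‖f x‖ₑ ^ 2 ∂μ := by
    intro f
    rw [← lintegral_const_mul' _ _ hM]
    exact lintegral_mono fun x => by rw [mul_comm]; gcongr; exact hwM x
  have hfin : ∀ f : X → ℂ, MemLp f 2 μ → ∫⁻ x, ‖f x‖ₑ ^ 2 * w x ∂μ ≠ ∞ := fun f hf =>
    ne_top_of_le_ne_top (ENNReal.mul_ne_top hM (hf.ofReal_integral_norm_sq ▸ ENNReal.ofReal_ne_top))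
      (hupper f)
  constructor
  · rintro ⟨A, B, hA, -, hbounds⟩
    refine ⟨A, hA, ?_⟩
    have hae := ae_le_of_forall_memLp_le_lintegral_mul (μ := μ) (w := w) (c := ENNReal.ofReal A)
      fun f hf => by
        rw [← hf.ofReal_integral_norm_sq, ← ENNReal.ofReal_mul hA.le,
          ← ENNReal.ofReal_toReal (hfin f hf)]
        exact ENNReal.ofReal_le_ofReal (hbounds f hf).1
    filter_upwards [hae] with x hx
    exact (ENNReal.ofReal_le_iff_le_toReal (ne_top_of_le_ne_top hM (hwM x))).1 hx
  · rintro ⟨c, hc, hcw⟩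
    refine ⟨c, M.toReal + 1, hc, by positivity, fun f hf => ⟨?_, ?_⟩⟩
    · have hlow : ENNReal.ofReal c * ∫⁻ x, ‖f x‖ₑ ^ 2 ∂μ ≤ ∫⁻ x, ‖f x‖ₑ ^ 2 * w x ∂μ := by
        rw [← lintegral_const_mul' _ _ ENNReal.ofReal_ne_top]
        refine lintegral_mono_ae (hcw.mono fun x hx => ?_)
        rw [mul_comm]
        gcongr
        exact ENNReal.ofReal_le_of_le_toReal hx
      have := ENNReal.toReal_mono (hfin f hf) hlow
      rwa [← hf.ofReal_integral_norm_sq, ← ENNReal.ofReal_mul hc.le,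
        ENNReal.toReal_ofReal (mul_nonneg hc.le (integral_nonneg fun _ => by positivity))] at this
    · have := ENNReal.toReal_mono (ENNReal.mul_ne_top hM
        (hf.ofReal_integral_norm_sq ▸ ENNReal.ofReal_ne_top)) (hupper f)
      rw [← hf.ofReal_integral_norm_sq, ENNReal.toReal_mul,
        ENNReal.toReal_ofReal (integral_nonneg fun _ => by positivity)] at this
      have hI : 0 ≤ ∫ x, ‖f x‖ ^ 2 ∂μ := integral_nonneg fun x => by positivity
      nlinarith

lemma exists_pos_ae_le_const_mul_iff {K : ℝ} (hK : 0 < K) {s : X → ℝ} :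
    (∃ c : ℝ, 0 < c ∧ ∀ᵐ x ∂μ, c ≤ K * s x) ↔ ∃ c : ℝ, 0 < c ∧ ∀ᵐ x ∂μ, c ≤ s x := by
  constructor
  · rintro ⟨c, hc, h⟩
    refine ⟨c / K, div_pos hc hK, h.mono fun x hx => ?_⟩
    rwa [div_le_iff₀' hK]
  · rintro ⟨c, hc, h⟩
    exact ⟨K * c, mul_pos hK hc, h.mono fun x hx => mul_le_mul_of_nonneg_left hx hK.le⟩

lemma tsum_sq_norm_eq_toReal {ι E : Type*} [NormedAddCommGroup E] (u : ι → E) :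
    ∑' i, ‖u i‖ ^ 2 = (∑' i, ‖u i‖ₑ ^ 2).toReal := by
  rw [ENNReal.tsum_toReal_eq fun i => by simp]
  simp

end WeightedL2

def fourierRd {d : ℕ} (F : Rd d → ℂ) (ξ : Rd d) : ℂ :=
  ∫ t, F t * Complex.exp (-(2 * (π : ℂ) * I * (dotR ξ t : ℝ)))

section UnitTorus

open UnitAddTorus

/- Mathlib's Fourier theory on `UnitAddTorus` is stated for this measure; the global instance is
`ENNReal.ofReal 1 • haarAddCircle`, equal but not definitionally. -/
local instance : MeasureSpace UnitAddCircle := ⟨AddCircle.haarAddCircle⟩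

lemma mFourier_neg_apply_coe {d : ℕ} (n : Fin d → ℤ) (x : Rd d) :
    mFourier (-n) (fun i => (x i : UnitAddCircle)) =
      Complex.exp (-(2 * (π : ℂ) * I * (dotR (rvec n) x : ℝ))) := by
  simp only [mFourier, ContinuousMap.coe_mk, Pi.neg_apply, fourier_coe_apply, dotR, rvec]
  rw [← Complex.exp_sum]
  push_cast
  rw [Finset.mul_sum, ← Finset.sum_neg_distrib]
  exact congrArg _ (Finset.sum_congr rfl fun i _ => by ring)

def unitCubeLift (d : ℕ) : UnitAddTorus (Fin d) → Rd d :=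
  Subtype.val ∘ measurableEquivPiIoc 0

lemma measurePreserving_unitCubeLift (d : ℕ) :
    MeasurePreserving (unitCubeLift d) volume
      (volume.restrict {x : Rd d | ∀ i, x i ∈ Set.Ioc 0 1}) := by
  have hC : MeasurableSet {x : Rd d | ∀ i, x i ∈ Set.Ioc ((0 : Rd d) i) ((0 : Rd d) i + 1)} :=
    MeasurableSet.univ_pi' fun _ => measurableSet_Ioc
  have := (MeasurePreserving.mk measurable_subtype_coe (map_comap_subtype_coe hC volume)).comp
    (measurePreserving_equivPiIoc (0 : Rd d))
  simp only [Pi.zero_apply, zero_add] at this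
  exact this

lemma measurableEmbedding_unitCubeLift (d : ℕ) : MeasurableEmbedding (unitCubeLift d) :=
  (MeasurableEmbedding.subtype_coe (MeasurableSet.univ_pi' fun _ => measurableSet_Ioc)).comp
    (measurableEquivPiIoc 0).measurableEmbedding

lemma coe_unitCubeLift {d : ℕ} (y : UnitAddTorus (Fin d)) :
    (fun i => (unitCubeLift d y i : UnitAddCircle)) = y := by
  funext i
  simp [unitCubeLift]

lemma integral_comp_unitCubeLift {d : ℕ} {E : Type*} [NormedAddCommGroup E] [NormedSpace ℝ E]
    {Φ : Rd d → E} (hΦ : ∀ x, Φ x ≠ 0 → ∀ i, x i ∈ Set.Icc 0 1) :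
    ∫ y, Φ (unitCubeLift d y) = ∫ x, Φ x := by
  rw [(measurePreserving_unitCubeLift d).integral_comp (measurableEmbedding_unitCubeLift d)]
  refine setIntegral_eq_integral_of_ae_compl_eq_zero ?_
  have hface : ∀ᵐ x : Rd d, ∀ i, x i ≠ 0 := ae_all_iff.2 fun i => Measure.ae_eval_ne _ i 0
  filter_upwards [hface] with x hx hxC
  by_contra hΦx
  exact hxC fun i => ⟨(hΦ x hΦx i).1.lt_of_ne (hx i).symm, (hΦ x hΦx i).2⟩

theorem hasSum_sq_norm_fourierRd_of_unitCube {d : ℕ} {F : Rd d → ℂ} (hF : MemLp F 2)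
    (hsupp : ∀ t, F t ≠ 0 → ∀ i, t i ∈ Set.Icc 0 1) :
    HasSum (fun n : Fin d → ℤ => ‖fourierRd F (rvec n)‖ ^ 2) (∫ t, ‖F t‖ ^ 2) := by
  set H := F ∘ unitCubeLift d
  have hH : MemLp H 2 := (hF.restrict _).comp_measurePreserving (measurePreserving_unitCubeLift d)
  have hcoeff : ∀ n, mFourierCoeff (hH.toLp H) n = fourierRd F (rvec n) := by
    intro n
    calc mFourierCoeff (hH.toLp H) n = ∫ y, mFourier (-n) y • H y :=
          integral_congr_ae (hH.coeFn_toLp.mono fun y hy => by simp only [hy])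
      _ = fourierRd F (rvec n) := by
          rw [fourierRd, ← integral_comp_unitCubeLift fun x hx => hsupp x (left_ne_zero_of_mul hx)]
          refine integral_congr_ae (ae_of_all _ fun y => ?_)
          dsimp only
          rw [← mFourier_neg_apply_coe, coe_unitCubeLift, smul_eq_mul, mul_comm]
          rfl
  have hnorm : ∫ y, ‖hH.toLp H y‖ ^ 2 = ∫ t, ‖F t‖ ^ 2 := by
    rw [← integral_comp_unitCubeLift fun x hx => hsupp x (by simpa using hx)]
    exact integral_congr_ae (hH.coeFn_toLp.mono fun y hy => by simp only [hy]; rfl)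
  simpa only [hcoeff, hnorm] using hasSum_sq_mFourierCoeff (hH.toLp H)

end UnitTorus

lemma map_affine_volume {d : ℕ} (a : Rd d) {T : ℝ} (hT : T ≠ 0) :
    Measure.map (fun x : Rd d => a + T • x) volume = ENNReal.ofReal |(T ^ d)⁻¹| • volume := by
  have h := Measure.map_addHaar_smul (volume : Measure (Rd d)) hT
  rw [Module.finrank_fin_fun] at h
  rw [show (fun x : Rd d => a + T • x) = (a + ·) ∘ (T • ·) from rfl,
    ← Measure.map_map (measurable_const_add a) (measurable_const_smul T), h,
    Measure.map_smul, map_add_left_eq_self]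

lemma integral_comp_affine {d : ℕ} {E : Type*} [NormedAddCommGroup E] [NormedSpace ℝ E]
    (Φ : Rd d → E) (a : Rd d) (T : ℝ) :
    ∫ x, Φ (a + T • x) = |(T ^ d)⁻¹| • ∫ x, Φ x := by
  rw [Measure.integral_comp_smul volume (fun y => Φ (a + y)) T, integral_add_left_eq_self,
    Module.finrank_fin_fun]

lemma dotR_add_smul {d : ℕ} (ξ a x : Rd d) (T : ℝ) :
    dotR ξ (a + T • x) = dotR ξ a + dotR (T • ξ) x := by
  simp only [dotR, Pi.add_apply, Pi.smul_apply, smul_eq_mul, mul_add, Finset.sum_add_distrib]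
  congr 1
  exact Finset.sum_congr rfl fun i _ => by ring

lemma norm_exp_neg_two_pi_I_mul (r : ℝ) : ‖Complex.exp (-(2 * (π : ℂ) * I * r))‖ = 1 := by
  rw [show -(2 * (π : ℂ) * I * r) = ((-(2 * π * r) : ℝ) : ℂ) * I by push_cast; ring]
  exact Complex.norm_exp_ofReal_mul_I _

theorem hasSum_sq_norm_fourierRd_of_cube {d : ℕ} {F : Rd d → ℂ} {a : Rd d} {T : ℝ} (hT : 0 < T)
    (hF : MemLp F 2) (hsupp : ∀ t, F t ≠ 0 → ∀ i, t i ∈ Set.Icc (a i) (a i + T)) :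
    HasSum (fun n : Fin d → ℤ => ‖fourierRd F (T⁻¹ • rvec n)‖ ^ 2) (T ^ d * ∫ t, ‖F t‖ ^ 2) := by
  set F₁ : Rd d → ℂ := fun x => F (a + T • x)
  have hF₁ : MemLp F₁ 2 := by
    refine MemLp.comp_of_map ?_ (by fun_prop)
    rw [map_affine_volume a hT.ne']
    exact hF.smul_measure ENNReal.ofReal_ne_top
  have hsupp₁ : ∀ x, F₁ x ≠ 0 → ∀ i, x i ∈ Set.Icc 0 1 := by
    intro x hx i
    have h := hsupp _ hx i
    simp only [Pi.add_apply, Pi.smul_apply, smul_eq_mul, Set.mem_Icc] at h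
    constructor <;> nlinarith
  have hTd : |T ^ d| = T ^ d := abs_of_pos (pow_pos hT d)
  have hcoeff : ∀ n : Fin d → ℤ,
      ‖fourierRd F (T⁻¹ • rvec n)‖ = T ^ d * ‖fourierRd F₁ (rvec n)‖ := by
    intro n
    set ξ := T⁻¹ • rvec n
    have h : fourierRd F₁ (rvec n) * Complex.exp (-(2 * (π : ℂ) * I * (dotR ξ a : ℝ))) =
        |(T ^ d)⁻¹| • fourierRd F ξ := by
      rw [fourierRd, fourierRd, ← integral_mul_const, ← integral_comp_affine]
      refine integral_congr_ae (ae_of_all _ fun x => ?_)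
      simp only [F₁, ξ, dotR_add_smul, smul_smul, mul_inv_cancel₀ hT.ne', one_smul,
        Complex.ofReal_add, mul_add, neg_add, Complex.exp_add]
      ring
    have h' := congrArg norm h
    rw [norm_mul, norm_exp_neg_two_pi_I_mul, mul_one, norm_smul, abs_inv, hTd, norm_inv,
      Real.norm_of_nonneg (pow_nonneg hT.le d)] at h'
    rw [h']
    field_simp
  have hnorm : ∫ x, ‖F₁ x‖ ^ 2 = (T ^ d)⁻¹ * ∫ t, ‖F t‖ ^ 2 := by
    rw [integral_comp_affine (fun t => ‖F t‖ ^ 2), abs_inv, hTd, smul_eq_mul]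
  have h := (hasSum_sq_norm_fourierRd_of_unitCube hF₁ hsupp₁).mul_left ((T ^ d) ^ 2)
  have hsq : (fun n : Fin d → ℤ => ‖fourierRd F (T⁻¹ • rvec n)‖ ^ 2) =
      fun n => (T ^ d) ^ 2 * ‖fourierRd F₁ (rvec n)‖ ^ 2 := funext fun n => by rw [hcoeff, mul_pow]
  rw [hsq, show T ^ d * ∫ t, ‖F t‖ ^ 2 = (T ^ d) ^ 2 * ∫ x, ‖F₁ x‖ ^ 2 by rw [hnorm]; field_simp]
  exact h

lemma l2inner_tfShift_eq_stft {d : ℕ} (f g : Rd d → ℂ) (z : PS d) :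
    l2inner f (tfShift z g) = stft g f z := by
  refine integral_congr_ae (ae_of_all _ fun t => ?_)
  simp only [tfShift, map_mul, ← Complex.exp_conj, Complex.conj_ofReal, Complex.conj_I,
    map_ofNat]
  ring_nf

lemma stft_eq_fourierRd {d : ℕ} (f g : Rd d → ℂ) (z : PS d) :
    stft g f z = fourierRd (fun t => f t * (starRingEnd ℂ) (g (t - z.1))) z.2 := rfl

theorem tsum_enorm_stft_sq {d : ℕ} {g : Rd d → ℂ} {L T Cg : ℝ} (hT : 0 < T) (hLT : L ≤ T)
    (hg : Measurable g) (hbd : ∀ t, ‖g t‖ ≤ Cg)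
    (hsupp : ∀ t : Rd d, g t ≠ 0 → ∀ i, t i ∈ Set.Icc 0 L) {f : Rd d → ℂ} (hf : MemLp f 2)
    (x : Rd d) :
    ∑' n : Fin d → ℤ, ‖stft g f (x, T⁻¹ • rvec n)‖ₑ ^ 2 =
      ENNReal.ofReal (T ^ d) * ∫⁻ t, ‖f t‖ₑ ^ 2 * ‖g (t - x)‖ₑ ^ 2 := by
  set F : Rd d → ℂ := fun t => f t * (starRingEnd ℂ) (g (t - x))
  have hF : MemLp F 2 := by
    have hφ : MemLp (fun t => (starRingEnd ℂ) (g (t - x))) ⊤ :=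
      memLp_top_of_bound (Complex.continuous_conj.measurable.comp
        (hg.comp (measurable_sub_const x))).aestronglyMeasurable Cg
        (ae_of_all _ fun t => by simpa using hbd (t - x))
    simpa only [mul_comm] using hf.mul' hφ
  have hsuppF : ∀ t, F t ≠ 0 → ∀ i, t i ∈ Set.Icc (x i) (x i + T) := by
    intro t ht i
    have h := hsupp _ (by simpa using right_ne_zero_of_mul ht) i
    simp only [Pi.sub_apply, Set.mem_Icc] at h
    constructor <;> linarith [h.1, h.2]
  have h := hasSum_sq_norm_fourierRd_of_cube hT hF hsuppF
  calc ∑' n : Fin d → ℤ, ‖stft g f (x, T⁻¹ • rvec n)‖ₑ ^ 2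
      = ∑' n : Fin d → ℤ, ENNReal.ofReal (‖fourierRd F (T⁻¹ • rvec n)‖ ^ 2) := by
        simp only [stft_eq_fourierRd]
        simp [F]
    _ = ENNReal.ofReal (T ^ d) * ∫⁻ t, ‖F t‖ₑ ^ 2 := by
        rw [← ENNReal.ofReal_tsum_of_nonneg (fun _ => by positivity) h.summable, h.tsum_eq,
          ENNReal.ofReal_mul (by positivity), hF.ofReal_integral_norm_sq]
    _ = _ := by simp only [F, enorm_mul, RCLike.enorm_conj, mul_pow]

theorem tsum_enorm_stft_lattice_sq {d : ℕ} {g : Rd d → ℂ} {L T Cg : ℝ} (hT : 0 < T)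
    (hLT : L ≤ T) (hg : Measurable g) (hbd : ∀ t, ‖g t‖ ≤ Cg)
    (hsupp : ∀ t : Rd d, g t ≠ 0 → ∀ i, t i ∈ Set.Icc 0 L) {f : Rd d → ℂ} (hf : MemLp f 2)
    (α : ℝ) :
    ∑' p : (Fin d → ℤ) × (Fin d → ℤ), ‖stft g f (α • rvec p.1, T⁻¹ • rvec p.2)‖ₑ ^ 2 =
      ∫⁻ t, ‖f t‖ₑ ^ 2 *
        (ENNReal.ofReal (T ^ d) * ∑' k : Fin d → ℤ, ‖g (t - α • rvec k)‖ₑ ^ 2) := by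
  have hmeas : ∀ k : Fin d → ℤ,
      AEMeasurable (fun t => ‖f t‖ₑ ^ 2 * ‖g (t - α • rvec k)‖ₑ ^ 2) := fun k =>
    (hf.1.enorm.pow_const 2).mul ((hg.comp (measurable_sub_const _)).enorm.pow_const 2).aemeasurable
  calc ∑' p : (Fin d → ℤ) × (Fin d → ℤ), ‖stft g f (α • rvec p.1, T⁻¹ • rvec p.2)‖ₑ ^ 2
      = ∑' (k : Fin d → ℤ) (n : Fin d → ℤ), ‖stft g f (α • rvec k, T⁻¹ • rvec n)‖ₑ ^ 2 :=
        ENNReal.tsum_prod'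
    _ = ∑' k : Fin d → ℤ, ∫⁻ t, ENNReal.ofReal (T ^ d) * (‖f t‖ₑ ^ 2 * ‖g (t - α • rvec k)‖ₑ ^ 2) :=
        tsum_congr fun k => by
          rw [tsum_enorm_stft_sq hT hLT hg hbd hsupp hf,
            lintegral_const_mul' _ _ ENNReal.ofReal_ne_top]
    _ = _ := by
        rw [← lintegral_tsum fun k => (hmeas k).const_mul _]
        refine lintegral_congr fun t => ?_
        rw [ENNReal.tsum_mul_left, ENNReal.tsum_mul_left]
        ring

lemma card_Icc_ceil_floor_le (y L : ℝ) {α : ℝ} (hα : 0 < α) :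
    (Finset.Icc ⌈(y - L) / α⌉ ⌊y / α⌋).card ≤ ⌈L / α⌉₊ + 1 := by
  rw [Int.card_Icc]
  have hreal : ((⌊y / α⌋ - ⌈(y - L) / α⌉ : ℤ) : ℝ) ≤ ⌈L / α⌉₊ := by
    have h : y / α - (y - L) / α = L / α := by field_simp; ring
    push_cast
    linarith [Int.floor_le (y / α), Int.le_ceil ((y - L) / α), Nat.le_ceil (L / α)]
  have hint : ⌊y / α⌋ - ⌈(y - L) / α⌉ ≤ (⌈L / α⌉₊ : ℤ) := by exact_mod_cast hreal
  omega

lemma mem_Icc_ceil_floor {y L α : ℝ} (hα : 0 < α) {m : ℤ} (h : y - α * m ∈ Set.Icc 0 L) :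
    m ∈ Finset.Icc ⌈(y - L) / α⌉ ⌊y / α⌋ := by
  rw [Finset.mem_Icc, Int.ceil_le, Int.le_floor, div_le_iff₀ hα, le_div_iff₀ hα]
  constructor <;> linarith [h.1, h.2]

theorem tsum_enorm_sq_translate_le {d : ℕ} {g : Rd d → ℂ} {L α Cg : ℝ} (hα : 0 < α)
    (hbd : ∀ t, ‖g t‖ ≤ Cg) (hsupp : ∀ t : Rd d, g t ≠ 0 → ∀ i, t i ∈ Set.Icc 0 L) (x : Rd d) :
    ∑' k : Fin d → ℤ, ‖g (x - α • rvec k)‖ₑ ^ 2 ≤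
      ((⌈L / α⌉₊ + 1) ^ d : ℕ) * ENNReal.ofReal (Cg ^ 2) := by
  classical
  set s := Fintype.piFinset fun i => Finset.Icc ⌈(x i - L) / α⌉ ⌊x i / α⌋
  have hvanish : ∀ k ∉ s, ‖g (x - α • rvec k)‖ₑ ^ 2 = 0 := by
    intro k hk
    by_contra hne
    refine hk (Fintype.mem_piFinset.2 fun i => mem_Icc_ceil_floor hα ?_)
    exact hsupp _ (by simpa using hne) i
  have hterm : ∀ k ∈ s, ‖g (x - α • rvec k)‖ₑ ^ 2 ≤ ENNReal.ofReal (Cg ^ 2) := by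
    intro k _
    rw [← ofReal_norm, ← ENNReal.ofReal_pow (norm_nonneg _)]
    exact ENNReal.ofReal_le_ofReal (pow_le_pow_left₀ (norm_nonneg _) (hbd _) 2)
  have hcard : s.card ≤ (⌈L / α⌉₊ + 1) ^ d := by
    rw [Fintype.card_piFinset]
    simpa using Finset.prod_le_pow_card Finset.univ _ _ fun i _ =>
      card_Icc_ceil_floor_le (x i) L hα
  calc ∑' k, ‖g (x - α • rvec k)‖ₑ ^ 2
      = ∑ k ∈ s, ‖g (x - α • rvec k)‖ₑ ^ 2 := tsum_eq_sum hvanish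
    _ ≤ s.card * ENNReal.ofReal (Cg ^ 2) := by
      simpa using Finset.sum_le_card_nsmul s _ _ hterm
    _ ≤ _ := by gcongr

/- If `k i < l i`, the `i`-th coordinates of the two arguments differ by at least `T ≥ L` and both
lie in `[0, L]`, which forces them to be the endpoints `L` and `0`; `hy` excludes exactly this. -/
lemma mul_conj_translate_eq_zero {d : ℕ} {g : Rd d → ℂ} {L T : ℝ}
    (hsupp : ∀ t : Rd d, g t ≠ 0 → ∀ i, t i ∈ Set.Icc 0 L) (hT : 0 ≤ T) (hLT : L ≤ T)
    {y : Rd d} (hy : ∀ i (m : ℤ), y i ≠ T * m ∧ y i ≠ L + T * m) {k l : Fin d → ℤ}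
    (hkl : k ≠ l) : g (y - T • rvec k) * (starRingEnd ℂ) (g (y - T • rvec l)) = 0 := by
  obtain ⟨i, hi⟩ := Function.ne_iff.1 hkl
  by_contra hne
  have hu : y i - T * k i ∈ Set.Icc 0 L := hsupp _ (left_ne_zero_of_mul hne) i
  have hv : y i - T * l i ∈ Set.Icc 0 L :=
    hsupp _ (by simpa using right_ne_zero_of_mul hne) i
  rcases lt_or_gt_of_ne hi with hlt | hlt
  · have hkl' : (k i : ℝ) + 1 ≤ l i := by exact_mod_cast hlt
    have := mul_le_mul_of_nonneg_left hkl' hT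
    exact (hy i (k i)).2 (by linarith [hu.2, hv.1])
  · have hkl' : (l i : ℝ) + 1 ≤ k i := by exact_mod_cast hlt
    have := mul_le_mul_of_nonneg_left hkl' hT
    exact (hy i (k i)).1 (by linarith [hu.1, hv.2])

theorem ae_ronShen_offDiag_eq_zero {d : ℕ} {g : Rd d → ℂ} {L T : ℝ}
    (hsupp : ∀ t : Rd d, g t ≠ 0 → ∀ i, t i ∈ Set.Icc 0 L) (hT : 0 ≤ T) (hLT : L ≤ T) (α : ℝ) :
    ∀ᵐ x : Rd d, ∀ k l : Fin d → ℤ, k ≠ l →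
      ∑' j : Fin d → ℤ, g (x + α • rvec j - T • rvec k) *
        (starRingEnd ℂ) (g (x + α • rvec j - T • rvec l)) = 0 := by
  have hgeneric : ∀ᵐ x : Rd d, ∀ (j : Fin d → ℤ) (i : Fin d) (m : ℤ),
      x i + α * j i ≠ T * m ∧ x i + α * j i ≠ L + T * m := by
    simp only [ae_all_iff]
    intro j i m
    filter_upwards [Measure.ae_eval_ne (fun _ => volume) i (T * m - α * j i),
      Measure.ae_eval_ne (fun _ => volume) i (L + T * m - α * j i)] with x h₁ h₂
    exact ⟨fun h => h₁ (by linarith), fun h => h₂ (by linarith)⟩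
  filter_upwards [hgeneric] with x hx k l hkl
  exact (tsum_congr fun j => mul_conj_translate_eq_zero hsupp hT hLT (hx j) hkl).trans tsum_zero

theorem painless_expansions_general {d : ℕ} (g : Rd d → ℂ) (L α β Cg : ℝ)
    (hL : 0 < L) (hmeas : Measurable g) (hbd : ∀ t, ‖g t‖ ≤ Cg)
    (hsupp : ∀ t : Rd d, g t ≠ 0 → ∀ i, t i ∈ Set.Icc 0 L)
    (hα : 0 < α) (hβ : 0 < β) (hβL : β ≤ 1 / L) :
    (∀ᵐ x : Rd d, ∀ k l : Fin d → ℤ, k ≠ l →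
      (∑' j : Fin d → ℤ,
        g (x + α • rvec j - β⁻¹ • rvec k) *
          (starRingEnd ℂ) (g (x + α • rvec j - β⁻¹ • rvec l))) = 0) ∧
    ((∃ CA CB : ℝ, 0 < CA ∧ 0 < CB ∧
        ∀ f : Rd d → ℂ, MemLp f 2 (volume : Measure (Rd d)) →
          CA * ∫ t, ‖f t‖ ^ 2 ≤
              (∑' p : (Fin d → ℤ) × (Fin d → ℤ),
                ‖l2inner f (tfShift (α • rvec p.1, β • rvec p.2) g)‖ ^ 2) ∧
            (∑' p : (Fin d → ℤ) × (Fin d → ℤ),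
                ‖l2inner f (tfShift (α • rvec p.1, β • rvec p.2) g)‖ ^ 2) ≤
              CB * ∫ t, ‖f t‖ ^ 2) ↔
      ∃ CA : ℝ, 0 < CA ∧
        ∀ᵐ x : Rd d, CA ≤ ∑' k : Fin d → ℤ, ‖g (x - α • rvec k)‖ ^ 2) := by
  have hT : 0 < β⁻¹ := inv_pos.2 hβ
  have hLT : L ≤ β⁻¹ := (le_inv_comm₀ hL hβ).2 (by rwa [one_div] at hβL)
  refine ⟨ae_ronShen_offDiag_eq_zero hsupp hT.le hLT α, ?_⟩
  set w : Rd d → ℝ≥0∞ :=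
    fun t => ENNReal.ofReal (β⁻¹ ^ d) * ∑' k : Fin d → ℤ, ‖g (t - α • rvec k)‖ₑ ^ 2
  have hframe : ∀ f : Rd d → ℂ, MemLp f 2 →
      ∑' p : (Fin d → ℤ) × (Fin d → ℤ), ‖l2inner f (tfShift (α • rvec p.1, β • rvec p.2) g)‖ ^ 2 =
        (∫⁻ t, ‖f t‖ₑ ^ 2 * w t).toReal := fun f hf => by
    rw [tsum_sq_norm_eq_toReal, ← tsum_enorm_stft_lattice_sq hT hLT hmeas hbd hsupp hf α]
    simp only [l2inner_tfShift_eq_stft, inv_inv]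
  have hwM : ∀ t, w t ≤
      ENNReal.ofReal (β⁻¹ ^ d) * (((⌈L / α⌉₊ + 1) ^ d : ℕ) * ENNReal.ofReal (Cg ^ 2)) :=
    fun t => mul_le_mul_right (tsum_enorm_sq_translate_le hα hbd hsupp t) _
  have hw : ∀ x, (w x).toReal = β⁻¹ ^ d * ∑' k : Fin d → ℤ, ‖g (x - α • rvec k)‖ ^ 2 :=
    fun x => by
      rw [ENNReal.toReal_mul, ENNReal.toReal_ofReal (by positivity), tsum_sq_norm_eq_toReal]
  rw [← exists_pos_ae_le_const_mul_iff (pow_pos hT d)]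
  simp only [← hw]
  rw [← exists_lintegral_mul_bounds_iff_ae_le (by finiteness) hwM]
  exact exists₂_congr fun A B => and_congr_right' <| and_congr_right' <|
    forall₂_congr fun f hf => by rw [hframe f hf]

/-- Painless non-orthogonal expansions: if `g ∈ L^∞(ℝ^d)` with
`supp g ⊆ [0,L]^d`, `α ≤ L` and `β ≤ 1/L`, then the Ron–Shen matrix `R(x)` is
diagonal for a.e. `x`, and `G(g, α, β)` is a frame for `L²(ℝ^d)` if and only if
`ess inf_x Σ_k |g(x - αk)|² > 0`. -/
theorem painless_expansions {d : ℕ} (g : Rd d → ℂ) (L α β Cg : ℝ)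
    (hL : 0 < L) (hmeas : Measurable g) (hbd : ∀ t, ‖g t‖ ≤ Cg)
    (hsupp : ∀ t : Rd d, g t ≠ 0 → ∀ i, t i ∈ Set.Icc 0 L)
    (hα : 0 < α) (hαL : α ≤ L) (hβ : 0 < β) (hβL : β ≤ 1 / L) :
    (∀ᵐ x : Rd d, ∀ k l : Fin d → ℤ, k ≠ l →
      (∑' j : Fin d → ℤ,
        g (x + α • rvec j - β⁻¹ • rvec k) *
          (starRingEnd ℂ) (g (x + α • rvec j - β⁻¹ • rvec l))) = 0) ∧
    ((∃ CA CB : ℝ, 0 < CA ∧ 0 < CB ∧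
        ∀ f : Rd d → ℂ, MemLp f 2 (volume : Measure (Rd d)) →
          CA * ∫ t, ‖f t‖ ^ 2 ≤
              (∑' p : (Fin d → ℤ) × (Fin d → ℤ),
                ‖l2inner f (tfShift (α • rvec p.1, β • rvec p.2) g)‖ ^ 2) ∧
            (∑' p : (Fin d → ℤ) × (Fin d → ℤ),
                ‖l2inner f (tfShift (α • rvec p.1, β • rvec p.2) g)‖ ^ 2) ≤
              CB * ∫ t, ‖f t‖ ^ 2) ↔
      ∃ CA : ℝ, 0 < CA ∧
        ∀ᵐ x : Rd d, CA ≤ ∑' k : Fin d → ℤ, ‖g (x - α • rvec k)‖ ^ 2) :=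
  painless_expansions_general g L α β Cg hL hmeas hbd hsupp hα hβ hβL
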